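/- If x ∈ D, i.e., Σ_{k=1}^{∞} |x_k x_{k+1}| < ∞, then 𝔉(x) = lim_{n→∞} 𝔉(x₁, x₂, …, x_n), where 𝔉(x₁,…,x_n) denotes 𝔉 applied to the sequence (x₁,…,x_n,0,0,…). -/

import Mathlib

open scoped BigOperators

/-- Index tuples (k₁,…,k_m) with all kᵢ ≥ 1 and k_{i+1} ≥ k_i + 2. -/
def GapTuple (m : ℕ) (k : Fin m → ℕ) : Prop :=
  (∀ i, 1 ≤ k i) ∧ ∀ i j : Fin m, (i : ℕ) + 1 = (j : ℕ) → k i + 2 ≤ k j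

/-- The m-th term Σ_{k₁,…,k_m} x_{k₁}x_{k₁+1}⋯x_{k_m}x_{k_m+1} of the series defining 𝔉. -/
noncomputable def Fterm (x : ℕ → ℂ) (m : ℕ) : ℂ :=
  ∑' k : {k : Fin m → ℕ // GapTuple m k}, ∏ i, x (k.1 i) * x (k.1 i + 1)

/-- The function 𝔉, with the sequence `x` 1-indexed (`x 0` is ignored). -/
noncomputable def Ffun (x : ℕ → ℂ) : ℂ :=
  1 + ∑' m : ℕ, (-1 : ℂ) ^ (m + 1) * Fterm x (m + 1)

/-- 𝔉(t₁,…,t_n), i.e. 𝔉 applied to the sequence (t₁,…,t_n,0,0,…). -/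
noncomputable def Ffin (n : ℕ) (t : ℕ → ℂ) : ℂ :=
  Ffun fun k => if 1 ≤ k ∧ k ≤ n then t k else 0

/-!
A gap tuple is strictly increasing, so it is determined by its set of entries. Flattened over all
pairs `(m, k)`, the double series defining `𝔉(x)` is therefore dominated termwise by the series
`∑ s, ∏ j ∈ s, ‖x j * x (j + 1)‖` over finite sets `s ⊆ ℕ`, which converges (to at most
`exp ∑ j, ‖x j * x (j + 1)‖`) when `x ∈ D`. The truncations of `x` are dominated by `x` and agree
with it on each single term eventually, so Tannery's theorem gives the limit.
-/

open Filter Topology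

theorem GapTuple.strictMono : ∀ {m : ℕ} {k : Fin m → ℕ}, GapTuple m k → StrictMono k
  | 0, _, _ => fun i => i.elim0
  | _ + 1, _, hk => Fin.strictMono_iff_lt_succ.2 fun i => by
    have := hk.2 i.castSucc i.succ rfl
    omega

abbrev GapIndex : Type := Σ m : ℕ, {k : Fin (m + 1) → ℕ // GapTuple (m + 1) k}

namespace GapIndex

def toFinset (p : GapIndex) : Finset ℕ := Finset.univ.image p.2.1

theorem toFinset_injective : Function.Injective toFinset := by
  rintro ⟨m, k, hk⟩ ⟨m', k', hk'⟩ h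
  obtain rfl : m = m' := by
    simpa [toFinset, Finset.card_image_of_injective _ hk.strictMono.injective,
      Finset.card_image_of_injective _ hk'.strictMono.injective] using congrArg Finset.card h
  obtain rfl : k = k' := by
    rw [← hk.strictMono.range_inj hk'.strictMono, ← Set.image_univ, ← Set.image_univ]
    simpa [toFinset] using congrArg (fun s : Finset ℕ => (s : Set ℕ)) h
  rfl

theorem prod_toFinset {M : Type*} [CommMonoid M] (f : ℕ → M) (p : GapIndex) :
    ∏ j ∈ p.toFinset, f j = ∏ i, f (p.2.1 i) :=
  Finset.prod_image fun _ _ _ _ h => p.2.2.strictMono.injective h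

end GapIndex

noncomputable def gapTerm (x : ℕ → ℂ) (p : GapIndex) : ℂ :=
  (-1) ^ (p.1 + 1) * ∏ i, x (p.2.1 i) * x (p.2.1 i + 1)

theorem norm_gapTerm (x : ℕ → ℂ) (p : GapIndex) :
    ‖gapTerm x p‖ = ∏ i, ‖x (p.2.1 i) * x (p.2.1 i + 1)‖ := by
  simp [gapTerm, norm_prod]

theorem summable_norm_gapTerm {x : ℕ → ℂ} (hx : Summable fun j => ‖x j * x (j + 1)‖) :
    Summable fun p => ‖gapTerm x p‖ := by
  have := (summable_finsetProd_of_summable_nonneg (fun _ => norm_nonneg _) hx).comp_injective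
    GapIndex.toFinset_injective
  simpa [Function.comp_def, GapIndex.prod_toFinset, norm_gapTerm] using this

theorem Ffun_eq_one_add_tsum_gapTerm {x : ℕ → ℂ} (hx : Summable (gapTerm x)) :
    Ffun x = 1 + ∑' p, gapTerm x p := by
  rw [Ffun, hx.tsum_sigma]
  congr 1
  exact tsum_congr fun m => tsum_mul_left.symm

theorem norm_gapTerm_le {x y : ℕ → ℂ} (hy : ∀ j, 1 ≤ j → ‖y j‖ ≤ ‖x j‖) (p : GapIndex) :
    ‖gapTerm y p‖ ≤ ‖gapTerm x p‖ := by
  simp only [norm_gapTerm, norm_mul]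
  gcongr with i
  · exact hy _ (p.2.2.1 i)
  · exact hy _ (by omega)

theorem tendsto_gapTerm {α : Type*} {l : Filter α} {x : ℕ → ℂ} {y : α → ℕ → ℂ}
    (hy : ∀ j, 1 ≤ j → Tendsto (fun a => y a j) l (𝓝 (x j))) (p : GapIndex) :
    Tendsto (fun a => gapTerm (y a) p) l (𝓝 (gapTerm x p)) :=
  (tendsto_finsetProd _ fun i _ =>
    (hy _ (p.2.2.1 i)).mul (hy _ (by omega))).const_mul _

/-- Coordinate `0` never enters `Ffun`, so it is exempt here: truncations vanish there. -/
theorem tendsto_Ffun {α : Type*} {l : Filter α} {x : ℕ → ℂ} {y : α → ℕ → ℂ}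
    (hx : Summable fun j => ‖x j * x (j + 1)‖)
    (hy : ∀ j, 1 ≤ j → Tendsto (fun a => y a j) l (𝓝 (x j)))
    (hle : ∀ a j, 1 ≤ j → ‖y a j‖ ≤ ‖x j‖) :
    Tendsto (fun a => Ffun (y a)) l (𝓝 (Ffun x)) := by
  have hbound := summable_norm_gapTerm hx
  have hsum : ∀ a, Summable (gapTerm (y a)) := fun a =>
    hbound.of_norm_bounded (norm_gapTerm_le (hle a))
  simp only [Ffun_eq_one_add_tsum_gapTerm (hsum _), Ffun_eq_one_add_tsum_gapTerm hbound.of_norm]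
  exact (tendsto_tsum_of_dominated_convergence hbound (tendsto_gapTerm hy)
    (.of_forall fun a => norm_gapTerm_le (hle a))).const_add 1

/-- If Σ|x_k x_{k+1}| < ∞ then 𝔉(x) = lim_{n→∞} 𝔉(x₁,…,x_n). -/
theorem Ffun_eq_lim_Ffin (x : ℕ → ℂ)
    (hx : Summable fun k : ℕ => ‖x (k + 1) * x (k + 2)‖) :
    Filter.Tendsto (fun n : ℕ => Ffin n x) Filter.atTop (nhds (Ffun x)) := by
  refine tendsto_Ffun ((summable_nat_add_iff 1).mp hx) (fun j hj => ?_) fun n j _ => ?_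
  · refine tendsto_const_nhds.congr' ?_
    filter_upwards [eventually_ge_atTop j] with n hn
    simp [hj, hn]
  · split_ifs <;> simp
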